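/- Let G be a finite group and let P be a partition of G satisfying the Schur-ring axioms: (a) {e} is a block of P; (b) for every block C of P, the set C* = {c⁻¹ : c ∈ C} is a block of P; (c) for all blocks C, D of P and all x, y lying in a common block of P, the number of pairs (c,d) ∈ C × D with cd = x equals the number of pairs (c,d) ∈ C × D with cd = y. Assume further that P is commutative: for all blocks C, D and every x ∈ G, the number of pairs (c,d) ∈ C × D with cd = x equals the number of pairs (d,c) ∈ D × C with dc = x. Then the following are equivalent: (i) for all blocks C ≠ E of P there is exactly one block D of P such that E ⊆ C·D (where C·D = {cd : c ∈ C, d ∈ D}); (ii) for all x, y ∈ G, if x lies in block C, y lies in block D, xy lies in block E, and C ≠ D*, then C·D = E. -/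

import Mathlib

open scoped Classical Pointwise

/-- The conjugacy class of `x` in `G`. -/
def conjClass {G : Type*} [Group G] (x : G) : Set G := {y | ∃ g : G, g * x * g⁻¹ = y}

/-- The adjacency matrix of a subset `C` of `G`. -/
noncomputable def adjMat (G : Type*) [Group G] (C : Set G) : Matrix G G ℂ :=
  Matrix.of fun x y => if y * x⁻¹ ∈ C then (1 : ℂ) else 0

/-- The dual idempotent of a subset `C` of `G` (base point the identity). -/
noncomputable def dualIdem (G : Type*) [Group G] (C : Set G) : Matrix G G ℂ :=
  Matrix.of fun x y => if x = y ∧ y ∈ C then (1 : ℂ) else 0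

/-- The Terwilliger algebra of the group association scheme of `G`, with base point `e`. -/
noncomputable def TerwAlg (G : Type*) [Group G] [Fintype G] [DecidableEq G] : Subalgebra ℂ (Matrix G G ℂ) :=
  Algebra.adjoin ℂ
    ((Set.range fun x : G => adjMat G (conjClass x)) ∪
     (Set.range fun x : G => dualIdem G (conjClass x)))

/-- A Camina group: a nonabelian group in which every conjugacy class outside the
commutator subgroup is a coset of the commutator subgroup. -/
def IsCamina (G : Type*) [Group G] : Prop :=
  (¬ ∀ a b : G, a * b = b * a) ∧
  ∀ x : G, x ∉ commutator G → conjClass x = x • (commutator G : Set G)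

/-- The action of the unit group of a field on (the multiplicative version of) its
additive group, by multiplication. -/
noncomputable def frobAct (F : Type*) [Field F] : Fˣ →* MulAut (Multiplicative F) where
  toFun u := AddEquiv.toMultiplicative (DistribMulAction.toAddAut Fˣ F u)
  map_one' := by ext x; simp [map_one]; rfl
  map_mul' u v := by ext x; simp only [map_mul]; rfl


/-- The Frobenius group `F ⋊ Fˣ` for `F` the field with `p ^ r` elements. -/
abbrev FrobGrp (p r : ℕ) [Fact p.Prime] : Type :=
  Multiplicative (GaloisField p r) ⋊[frobAct (GaloisField p r)] (GaloisField p r)ˣ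

/-- The number of ways to write `x` as a product `c * d` with `c ∈ C` and `d ∈ D`. -/
noncomputable def pairCount {G : Type*} [Group G] (C D : Set G) (x : G) : ℕ :=
  Nat.card {q : G × G // q.1 ∈ C ∧ q.2 ∈ D ∧ q.1 * q.2 = x}


section SchurPartition

open Set

variable {G : Type*}

theorem eq_of_mem_of_mem_of_disjoint {P : Set (Set G)}
    (hdisj : ∀ C ∈ P, ∀ D ∈ P, C ≠ D → Disjoint C D)
    {D F : Set G} (hD : D ∈ P) (hF : F ∈ P) {z : G} (hzD : z ∈ D) (hzF : z ∈ F) : D = F := by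
  by_contra h
  exact disjoint_left.mp (hdisj D hD F hF h) hzD hzF

variable [Group G]

/-- Condition (c) of a Schur ring. -/
def IsSchurCompatible (P : Set (Set G)) : Prop :=
  ∀ C ∈ P, ∀ D ∈ P, ∀ E ∈ P, ∀ x ∈ E, ∀ y ∈ E, pairCount C D x = pairCount C D y

def TanakaCriterion (P : Set (Set G)) : Prop :=
  ∀ C ∈ P, ∀ E ∈ P, C ≠ E → ∃! D, D ∈ P ∧ E ⊆ C * D

def HasProductProperty (P : Set (Set G)) : Prop :=
  ∀ C ∈ P, ∀ D ∈ P, ∀ E ∈ P, ∀ x ∈ C, ∀ y ∈ D, x * y ∈ E → C ≠ D⁻¹ → C * D = E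

theorem pairCount_pos_iff [Finite G] (C D : Set G) (x : G) :
    0 < pairCount C D x ↔ x ∈ C * D := by
  rw [pairCount, Nat.card_pos_iff, mem_mul]
  constructor
  · rintro ⟨⟨⟨⟨c, d⟩, hc, hd, h⟩⟩, -⟩
    exact ⟨c, hc, d, hd, h⟩
  · rintro ⟨c, hc, d, hd, h⟩
    exact ⟨⟨⟨(c, d), hc, hd, h⟩⟩, inferInstance⟩

variable [Finite G] {P : Set (Set G)}

/-- In a Schur partition, a product of blocks is a union of blocks. -/
theorem IsSchurCompatible.subset_mul (hschur : IsSchurCompatible P) {C D E : Set G}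
    (hC : C ∈ P) (hD : D ∈ P) (hE : E ∈ P) {x : G} (hxE : x ∈ E) (hx : x ∈ C * D) :
    E ⊆ C * D := by
  intro y hyE
  unfold IsSchurCompatible at hschur
  rw [← pairCount_pos_iff] at hx ⊢
  rwa [← hschur C hC D hD E hE x hxE y hyE]

theorem IsSchurCompatible.inv_subset_mul_inv (hschur : IsSchurCompatible P) {C D E : Set G}
    (hC : C⁻¹ ∈ P) (hD : D ∈ P) (hE : E⁻¹ ∈ P) {x y : G} (hx : x ∈ C) (hy : y ∈ D)
    (hxy : x * y ∈ E) : C⁻¹ ⊆ D * E⁻¹ :=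
  hschur.subset_mul hD hE hC (inv_mem_inv.mpr hx)
    (mem_mul.mpr ⟨y, hy, (x * y)⁻¹, inv_mem_inv.mpr hxy, by group⟩)

/-- If `xy ∈ E` and `z ∈ F` both lie in `C * D`, then `C⁻¹ ⊆ D * E⁻¹` and `C⁻¹ ⊆ D * F⁻¹`;
uniqueness in Tanaka's criterion for the pair `D`, `C⁻¹` forces `E = F`. -/
theorem TanakaCriterion.hasProductProperty (hcover : ∀ x : G, ∃ C ∈ P, x ∈ C)
    (hinv : ∀ C ∈ P, C⁻¹ ∈ P) (hschur : IsSchurCompatible P) (htanaka : TanakaCriterion P) :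
    HasProductProperty P := by
  intro C hC D hD E hE x hx y hy hxy hCD
  refine Subset.antisymm ?_ (hschur.subset_mul hC hD hE hxy (mul_mem_mul hx hy))
  intro z hz
  obtain ⟨F, hF, hzF⟩ := hcover z
  obtain ⟨c, hc, d, hd, rfl⟩ := mem_mul.mp hz
  have hDC : D ≠ C⁻¹ := fun h => hCD (by rw [h, inv_inv])
  obtain ⟨X, -, hX⟩ := htanaka D hD C⁻¹ (hinv C hC) hDC
  have hEX : E⁻¹ = X :=
    hX E⁻¹ ⟨hinv E hE, hschur.inv_subset_mul_inv (hinv C hC) hD (hinv E hE) hx hy hxy⟩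
  have hFX : F⁻¹ = X :=
    hX F⁻¹ ⟨hinv F hF, hschur.inv_subset_mul_inv (hinv C hC) hD (hinv F hF) hc hd hzF⟩
  rwa [inv_injective (hEX.trans hFX.symm)]

/-- For blocks `C ≠ E`, the unique block `D` with `E ⊆ C * D` is `C⁻¹ * E`, which is a single
block by the product property. -/
theorem HasProductProperty.tanakaCriterion (hne : ∀ C ∈ P, C.Nonempty)
    (hdisj : ∀ C ∈ P, ∀ D ∈ P, C ≠ D → Disjoint C D) (hcover : ∀ x : G, ∃ C ∈ P, x ∈ C)
    (hinv : ∀ C ∈ P, C⁻¹ ∈ P) (hschur : IsSchurCompatible P) (hprod : HasProductProperty P) :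
    TanakaCriterion P := by
  intro C hC E hE hCE
  obtain ⟨e, he⟩ := hne E hE
  obtain ⟨c, hc⟩ := hne C hC
  obtain ⟨F, hF, hceF⟩ := hcover (c⁻¹ * e)
  have hCEF : C⁻¹ * E = F :=
    hprod C⁻¹ (hinv C hC) E hE F hF c⁻¹ (inv_mem_inv.mpr hc) e he hceF
      fun h => hCE (inv_injective h)
  have hEsub : E ⊆ C * F :=
    hschur.subset_mul hC hF hE he (mem_mul.mpr ⟨c, hc, c⁻¹ * e, hceF, by group⟩)
  refine ⟨F, ⟨hF, hEsub⟩, ?_⟩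
  rintro D ⟨hD, hED⟩
  obtain ⟨c', hc', d, hd, hcd⟩ := mem_mul.mp (hED he)
  have hdF : d ∈ F :=
    hCEF ▸ mem_mul.mpr ⟨c'⁻¹, inv_mem_inv.mpr hc', e, he, by rw [← hcd]; group⟩
  exact eq_of_mem_of_mem_of_disjoint hdisj hD hF hd hdF

end SchurPartition

theorem stmt0_general {G : Type*} [Group G] [Fintype G] (P : Set (Set G))
    (hne : ∀ C ∈ P, C.Nonempty)
    (hdisj : ∀ C ∈ P, ∀ D ∈ P, C ≠ D → Disjoint C D)
    (hcover : ∀ x : G, ∃ C ∈ P, x ∈ C)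
    (hinv : ∀ C ∈ P, C⁻¹ ∈ P)
    (hschur : ∀ C ∈ P, ∀ D ∈ P, ∀ E ∈ P, ∀ x ∈ E, ∀ y ∈ E,
      pairCount C D x = pairCount C D y) :
    (∀ C ∈ P, ∀ E ∈ P, C ≠ E → ∃! D, D ∈ P ∧ E ⊆ C * D) ↔
      (∀ C ∈ P, ∀ D ∈ P, ∀ E ∈ P, ∀ x ∈ C, ∀ y ∈ D,
        x * y ∈ E → C ≠ D⁻¹ → C * D = E) :=
  ⟨TanakaCriterion.hasProductProperty hcover hinv hschur,
    HasProductProperty.tanakaCriterion hne hdisj hcover hinv hschur⟩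

/-- Theorem 2.2: for a commutative Schur ring, Tanaka's intersection-number criterion for
almost commutativity of the Terwilliger algebra is equivalent to the product property. -/
theorem stmt0 {G : Type*} [Group G] [Fintype G] (P : Set (Set G))
    (hne : ∀ C ∈ P, C.Nonempty)
    (hdisj : ∀ C ∈ P, ∀ D ∈ P, C ≠ D → Disjoint C D)
    (hcover : ∀ x : G, ∃ C ∈ P, x ∈ C)
    (hone : {(1 : G)} ∈ P)
    (hinv : ∀ C ∈ P, C⁻¹ ∈ P)
    (hschur : ∀ C ∈ P, ∀ D ∈ P, ∀ E ∈ P, ∀ x ∈ E, ∀ y ∈ E,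
      pairCount C D x = pairCount C D y)
    (hcomm : ∀ C ∈ P, ∀ D ∈ P, ∀ x : G, pairCount C D x = pairCount D C x) :
    (∀ C ∈ P, ∀ E ∈ P, C ≠ E → ∃! D, D ∈ P ∧ E ⊆ C * D) ↔
      (∀ C ∈ P, ∀ D ∈ P, ∀ E ∈ P, ∀ x ∈ C, ∀ y ∈ D,
        x * y ∈ E → C ≠ D⁻¹ → C * D = E) :=
  stmt0_general P hne hdisj hcover hinv hschur
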